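/- arXiv:1203.0381 — 3 statements merged into one kernel-verified Lean document; each statement's English description precedes it below -/
import Mathlib

section
/- For any a,b,c>0, the convolution of the Kummer distribution K^{(2)}(a,b,c) and the gamma distribution γ(b,c) equals K^{(2)}(a+b,−b,c): K^{(2)}(a,b,c) * γ(b,c) = K^{(2)}(a+b,−b,c). -/
open Set MeasureTheory ProbabilityTheory
open Real
open scoped ENNReal

/-- The Kummer distribution of type 2, `K⁽²⁾(p,q,c)`. -/
noncomputable def kummerMeasure (p q c : ℝ) : Measure ℝ :=
  (volume.restrict (Ioi (0:ℝ))).withDensity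
    (fun w => ENNReal.ofReal
      ((w ^ (p - 1) * (1 + w) ^ (-p - q) * Real.exp (-c * w)) /
        ∫ t in Ioi (0:ℝ), t ^ (p - 1) * (1 + t) ^ (-p - q) * Real.exp (-c * t)))

namespace KummerConvAux

noncomputable def phi (s u : ℝ) : ℝ := s * u / (1 + s * (1 - u))

theorem lintegral_image_eq_lintegral_abs_deriv_mul' {s : Set ℝ} {f : ℝ → ℝ} {f' : ℝ → ℝ}
    (hs : MeasurableSet s) (hf' : ∀ x ∈ s, HasDerivWithinAt f (f' x) s x)
    (hf : InjOn f s) (g : ℝ → ℝ≥0∞) :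
    ∫⁻ x in f '' s, g x = ∫⁻ x in s, ENNReal.ofReal |f' x| * g (f x) := by
  simpa only [ContinuousLinearMap.det_toSpanSingleton] using
    lintegral_image_eq_lintegral_abs_det_fderiv_mul volume hs
      (fun x hx => (hf' x hx).hasFDerivWithinAt) hf g

lemma measurable_kd (p r c : ℝ) :
    Measurable fun x : ℝ => x ^ (p - 1) * (1 + x) ^ r * Real.exp (-c * x) := by
  fun_prop

lemma integrableOn_kd {p r c : ℝ} (hp : 0 < p) (hr : r ≤ 0) (hc : 0 < c) :
    IntegrableOn (fun t : ℝ => t ^ (p - 1) * (1 + t) ^ r * Real.exp (-c * t)) (Ioi 0) := by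
  have hbound : IntegrableOn (fun t : ℝ => t ^ (p - 1) * Real.exp (-c * t)) (Ioi 0) := by
    have := integrableOn_rpow_mul_exp_neg_mul_rpow (p := 1) (s := p - 1) (b := c)
      (by linarith) (by norm_num) hc
    simpa [Real.rpow_one] using this
  refine Integrable.mono' hbound ((measurable_kd p r c).aestronglyMeasurable) ?_
  filter_upwards [ae_restrict_mem measurableSet_Ioi] with t (ht : 0 < t)
  have h1t : (1 : ℝ) ≤ 1 + t := by linarith
  have h2 : (1 + t) ^ r ≤ 1 := Real.rpow_le_one_of_one_le_of_nonpos h1t hr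
  have h3 : 0 ≤ (1 + t) ^ r := Real.rpow_nonneg (by linarith) r
  have h4 : 0 ≤ t ^ (p - 1) := Real.rpow_nonneg ht.le _
  rw [Real.norm_of_nonneg (by positivity)]
  calc t ^ (p - 1) * (1 + t) ^ r * Real.exp (-c * t)
      ≤ t ^ (p - 1) * 1 * Real.exp (-c * t) := by
        apply mul_le_mul_of_nonneg_right _ (Real.exp_nonneg _)
        exact mul_le_mul_of_nonneg_left h2 h4
    _ = t ^ (p - 1) * Real.exp (-c * t) := by ring

lemma kd_pos {p r c t : ℝ} (ht : 0 < t) : 0 < t ^ (p - 1) * (1 + t) ^ r * Real.exp (-c * t) := by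
  have h1 : (0:ℝ) < 1 + t := by linarith
  positivity

lemma integral_kd_pos {p r c : ℝ} (hp : 0 < p) (hr : r ≤ 0) (hc : 0 < c) :
    0 < ∫ t in Ioi (0:ℝ), t ^ (p - 1) * (1 + t) ^ r * Real.exp (-c * t) := by
  rw [setIntegral_pos_iff_support_of_nonneg_ae]
  · have : Ioi (0:ℝ) ⊆ Function.support (fun t : ℝ => t ^ (p - 1) * (1 + t) ^ r * Real.exp (-c * t)) ∩ Ioi 0 :=
      fun t ht => ⟨(kd_pos ht).ne', ht⟩
    calc (0:ℝ≥0∞) < volume (Ioi (0:ℝ)) := by simp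
      _ ≤ _ := measure_mono this
  · filter_upwards [ae_restrict_mem measurableSet_Ioi] with t (ht : 0 < t)
    exact (kd_pos ht).le
  · exact integrableOn_kd hp hr hc


lemma D_pos {s : ℝ} (hs : 0 < s) {u : ℝ} (hu : u < 1) : 0 < 1 + s * (1 - u) := by nlinarith

lemma phi_hasDeriv {s : ℝ} (hs : 0 < s) {u : ℝ} (hu : u ∈ Ioo (0:ℝ) 1) :
    HasDerivWithinAt (phi s) (s * (1 + s) / (1 + s * (1 - u)) ^ 2) (Ioo 0 1) u := by
  have hD := D_pos hs hu.2
  have h1 : HasDerivAt (fun u : ℝ => s * u) s u := by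
    simpa using (hasDerivAt_id u).const_mul s
  have h2 : HasDerivAt (fun u : ℝ => 1 + s * (1 - u)) (-s) u := by
    have : HasDerivAt (fun u : ℝ => 1 - u) (-1) u := by
      simpa using (hasDerivAt_id u).const_sub 1
    simpa using ((this.const_mul s).const_add 1)
  have h3 := h1.div h2 hD.ne'
  have : (s * (1 + s * (1 - u)) - s * u * -s) / (1 + s * (1 - u)) ^ 2
      = s * (1 + s) / (1 + s * (1 - u)) ^ 2 := by
    field_simp
    ring
  rw [this] at h3
  exact h3.hasDerivWithinAt

lemma phi_injOn {s : ℝ} (hs : 0 < s) : InjOn (phi s) (Ioo 0 1) := by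
  intro u hu v hv h
  have hDu := D_pos hs hu.2
  have hDv := D_pos hs hv.2
  unfold phi at h
  rw [div_eq_div_iff hDu.ne' hDv.ne'] at h
  have : s * (1 + s) * u = s * (1 + s) * v := by nlinarith
  have hs1 : s * (1 + s) ≠ 0 := by positivity
  exact mul_left_cancel₀ hs1 this

lemma phi_image {s : ℝ} (hs : 0 < s) : phi s '' Ioo 0 1 = Ioo 0 s := by
  ext x
  constructor
  · rintro ⟨u, hu, rfl⟩
    have hD := D_pos hs hu.2
    constructor
    · exact div_pos (by nlinarith [hu.1]) hD
    · unfold phi; rw [div_lt_iff₀ hD]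
      nlinarith [mul_pos hs (sub_pos.2 hu.2), mul_pos (mul_pos hs hs) (sub_pos.2 hu.2)]
  · intro hx
    have hx1 : 0 < 1 + x := by nlinarith [hx.1]
    refine ⟨x * (1 + s) / (s * (1 + x)), ⟨?_, ?_⟩, ?_⟩
    · apply div_pos (by nlinarith [hx.1]) (by positivity)
    · rw [div_lt_one (by positivity)]
      nlinarith [hx.2]
    · unfold phi
      rw [div_eq_iff]
      · field_simp
        ring
      · have h1s : 0 < 1 + s := by linarith
        have : 1 + s * (1 - x * (1 + s) / (s * (1 + x))) = (1 + s) / (1 + x) := by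
          field_simp
          ring
        rw [this]
        positivity


lemma key_alg {a b s u : ℝ} (hs : 0 < s) (hu : u ∈ Ioo (0:ℝ) 1) :
    |s * (1 + s) / (1 + s * (1 - u)) ^ 2| *
      ((phi s u) ^ (a - 1) * (1 + phi s u) ^ (-a - b) * (s - phi s u) ^ (b - 1))
    = s ^ (a + b - 1) * (1 + s) ^ (-a) * (u ^ (a - 1) * (1 - u) ^ (b - 1)) := by
  obtain ⟨hu0, hu1⟩ := hu
  have hD : 0 < 1 + s * (1 - u) := D_pos hs hu1
  have h1s : (0:ℝ) < 1 + s := by linarith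
  have h1u : (0:ℝ) < 1 - u := by linarith
  set D := 1 + s * (1 - u) with hDdef
  have hphi : phi s u = s * u / D := rfl
  have h1phi : 1 + phi s u = (1 + s) / D := by
    rw [hphi]; field_simp; ring
  have hsphi : s - phi s u = s * (1 - u) * (1 + s) / D := by
    rw [hphi]; field_simp; ring
  rw [h1phi, hsphi, hphi, abs_of_pos (by positivity)]
  rw [Real.rpow_def_of_pos (by positivity : (0:ℝ) < s * u / D),
    Real.rpow_def_of_pos (by positivity : (0:ℝ) < (1 + s) / D),
    Real.rpow_def_of_pos (by positivity : (0:ℝ) < s * (1 - u) * (1 + s) / D),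
    Real.rpow_def_of_pos hs, Real.rpow_def_of_pos h1s,
    Real.rpow_def_of_pos hu0, Real.rpow_def_of_pos h1u]
  have hA : s * (1 + s) / D ^ 2 = Real.exp (Real.log s + Real.log (1 + s) - 2 * Real.log D) := by
    rw [Real.exp_sub, Real.exp_add, Real.exp_log hs, Real.exp_log h1s]
    rw [show (2:ℝ) * Real.log D = Real.log (D ^ 2) by
      rw [Real.log_pow]; push_cast; ring]
    rw [Real.exp_log (by positivity)]
  rw [hA, Real.log_div (by positivity) hD.ne', Real.log_div (by positivity) hD.ne',
    Real.log_div (by positivity) hD.ne', Real.log_mul hs.ne' hu0.ne',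
    Real.log_mul (by positivity) h1s.ne', Real.log_mul hs.ne' h1u.ne']
  rw [← Real.exp_add, ← Real.exp_add, ← Real.exp_add, ← Real.exp_add, ← Real.exp_add,
    ← Real.exp_add]
  congr 1
  ring


lemma conv_withDensity {f g : ℝ → ℝ≥0∞} (hf : Measurable f) (hg : Measurable g) :
    (volume.withDensity f).conv (volume.withDensity g)
      = volume.withDensity (fun s => ∫⁻ x, f x * g (s - x)) := by
  ext A hA
  rw [Measure.conv, Measure.map_apply measurable_add hA,
    Measure.prod_apply (measurable_add hA), withDensity_apply _ hA]
  have step1 : ∀ x : ℝ, (volume.withDensity g) (Prod.mk x ⁻¹' ((fun p : ℝ × ℝ => p.1 + p.2) ⁻¹' A))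
      = ∫⁻ s, g (s - x) * A.indicator 1 s := by
    intro x
    have hmeas : MeasurableSet {y : ℝ | x + y ∈ A} := (measurable_const_add x) hA
    have hset : (Prod.mk x ⁻¹' ((fun p : ℝ × ℝ => p.1 + p.2) ⁻¹' A)) = {y : ℝ | x + y ∈ A} := rfl
    rw [hset, withDensity_apply _ hmeas, ← lintegral_indicator hmeas]
    have h2 : ∀ y : ℝ, {y : ℝ | x + y ∈ A}.indicator g y = g y * A.indicator 1 (x + y) := by
      intro y
      by_cases hy : x + y ∈ A <;> simp [Set.indicator_apply, hy, Set.mem_setOf_eq]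
    simp_rw [h2]
    rw [← lintegral_add_left_eq_self (fun s => g (s - x) * A.indicator 1 s) x]
    simp
  simp_rw [step1]
  have hG2 : Measurable fun x : ℝ => ∫⁻ s, g (s - x) * A.indicator 1 s := by
    have : Measurable fun p : ℝ × ℝ => g (p.2 - p.1) * A.indicator 1 p.2 :=
      (hg.comp (measurable_snd.sub measurable_fst)).mul
        ((measurable_one.indicator hA).comp measurable_snd)
    exact this.lintegral_prod_right'
  rw [lintegral_withDensity_eq_lintegral_mul volume hf hG2]
  simp only [Pi.mul_apply]
  have h3 : ∀ x : ℝ, f x * ∫⁻ s, g (s - x) * A.indicator 1 s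
      = ∫⁻ s, f x * (g (s - x) * A.indicator 1 s) := fun x =>
    (lintegral_const_mul (f x) ((hg.comp (measurable_id'.sub_const x)).mul
      (measurable_one.indicator hA))).symm
  simp_rw [h3]
  rw [lintegral_lintegral_swap]
  · have h4 : ∀ s : ℝ, (∫⁻ x, f x * (g (s - x) * A.indicator 1 s))
        = A.indicator (fun s' => ∫⁻ x, f x * g (s' - x)) s := by
      intro s
      by_cases hs : s ∈ A
      · simp only [indicator_of_mem hs, Pi.one_apply, mul_one]
      · simp [indicator_of_notMem hs]
    simp_rw [h4]
    rw [lintegral_indicator hA]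
  · apply Measurable.aemeasurable
    exact ((hf.comp measurable_fst).mul ((hg.comp (measurable_snd.sub measurable_fst)).mul
      ((measurable_one.indicator hA).comp measurable_snd)))

section main
variable {a b c : ℝ}

/-- Change of variables step. -/
lemma cov_step (ha : 0 < a) (hb : 0 < b) {s : ℝ} (hs : 0 < s) :
    ∫⁻ x in Ioo (0:ℝ) s, ENNReal.ofReal (x ^ (a - 1) * (1 + x) ^ (-a - b) * (s - x) ^ (b - 1))
      = ENNReal.ofReal (s ^ (a + b - 1) * (1 + s) ^ (-a)) *
        ∫⁻ u in Ioo (0:ℝ) 1, ENNReal.ofReal (u ^ (a - 1) * (1 - u) ^ (b - 1)) := by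
  have himg : Ioo (0:ℝ) s = phi s '' Ioo 0 1 := by
    rw [phi_image hs]
  rw [himg, lintegral_image_eq_lintegral_abs_deriv_mul' measurableSet_Ioo
    (fun u hu => phi_hasDeriv hs hu) (phi_injOn hs)]
  rw [← lintegral_const_mul' _ _ ENNReal.ofReal_ne_top]
  apply setLIntegral_congr_fun measurableSet_Ioo
  intro u hu
  beta_reduce
  have habs : (0:ℝ) ≤ |s * (1 + s) / (1 + s * (1 - u)) ^ 2| := abs_nonneg _
  rw [← ENNReal.ofReal_mul habs, key_alg hs hu,
    ENNReal.ofReal_mul (by positivity)]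


lemma H_eval_neg {N₁ : ℝ} {s : ℝ} (hs : s ≤ 0) :
    ∫⁻ x, (Ioi (0:ℝ)).indicator
        (fun x => ENNReal.ofReal ((x ^ (a - 1) * (1 + x) ^ (-a - b) * Real.exp (-c * x)) / N₁)) x
        * gammaPDF b c (s - x) = 0 := by
  rw [lintegral_eq_zero_iff']
  · refine ae_of_all _ fun x => ?_
    by_cases hx : x ∈ Ioi (0:ℝ)
    · have : s - x < 0 := by simp only [mem_Ioi] at hx; linarith
      simp [gammaPDF_of_neg this]
    · simp [indicator_of_notMem hx]
  · apply Measurable.aemeasurable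
    apply Measurable.mul
    · apply Measurable.indicator _ measurableSet_Ioi
      fun_prop
    · exact (measurable_gammaPDFReal b c).ennreal_ofReal.comp (measurable_const.sub measurable_id')


lemma H_eval_pos (ha : 0 < a) (hb : 0 < b) (hc : 0 < c) {N₁ : ℝ} (hN₁ : 0 < N₁)
    {s : ℝ} (hs : 0 < s) :
    ∫⁻ x, (Ioi (0:ℝ)).indicator
        (fun x => ENNReal.ofReal ((x ^ (a - 1) * (1 + x) ^ (-a - b) * Real.exp (-c * x)) / N₁)) x
        * gammaPDF b c (s - x)
      = (ENNReal.ofReal (c ^ b / (Gamma b * N₁)) *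
          ∫⁻ u in Ioo (0:ℝ) 1, ENNReal.ofReal (u ^ (a - 1) * (1 - u) ^ (b - 1)))
        * ENNReal.ofReal (s ^ (a + b - 1) * (1 + s) ^ (-a) * Real.exp (-c * s)) := by
  set F : ℝ → ℝ≥0∞ := fun x => (Ioi (0:ℝ)).indicator
      (fun x => ENNReal.ofReal ((x ^ (a - 1) * (1 + x) ^ (-a - b) * Real.exp (-c * x)) / N₁)) x
      * gammaPDF b c (s - x) with hF
  have step1 : ∫⁻ x, F x = ∫⁻ x in Ioo 0 s, F x := by
    rw [← lintegral_indicator measurableSet_Ioo]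
    apply lintegral_congr_ae
    have hsing : (volume : Measure ℝ) {s} = 0 := volume_singleton
    rw [← MeasureTheory.compl_mem_ae_iff] at hsing
    filter_upwards [hsing] with x (hx : x ≠ s)
    by_cases h1 : x ∈ Ioo (0:ℝ) s
    · rw [indicator_of_mem h1]
    · rw [indicator_of_notMem h1, hF]
      simp only
      rcases le_or_gt x 0 with h2 | h2
      · rw [indicator_of_notMem (by simpa using h2), zero_mul]
      · have h3 : s - x < 0 := by
          simp only [mem_Ioo, not_and, not_lt] at h1
          rcases lt_or_ge x s with h4 | h4
          · exact absurd h4 (not_lt.mpr (h1 h2))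
          · cases (lt_or_eq_of_le h4) with
            | inl h5 => linarith
            | inr h5 => exact absurd h5.symm hx
        rw [gammaPDF_of_neg h3, mul_zero]
  have step2 : ∫⁻ x in Ioo 0 s, F x = ∫⁻ x in Ioo 0 s,
      ENNReal.ofReal ((c ^ b / (Gamma b * N₁) * Real.exp (-c * s)) *
        (x ^ (a - 1) * (1 + x) ^ (-a - b) * (s - x) ^ (b - 1))) := by
    apply setLIntegral_congr_fun measurableSet_Ioo
    intro x hx
    obtain ⟨hx0, hxs⟩ := hx
    rw [hF]
    simp only
    rw [indicator_of_mem (mem_Ioi.mpr hx0), gammaPDF_of_nonneg (by linarith : (0:ℝ) ≤ s - x),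
      ← ENNReal.ofReal_mul (by positivity)]
    congr 1
    have hexp : Real.exp (-c * x) * Real.exp (-(c * (s - x))) = Real.exp (-c * s) := by
      rw [← Real.exp_add]; congr 1; ring
    linear_combination (x ^ (a - 1) * (1 + x) ^ (-a - b) * (s - x) ^ (b - 1) * c ^ b /
      (Gamma b * N₁)) * hexp
  have hC : (0:ℝ) ≤ c ^ b / (Gamma b * N₁) * Real.exp (-c * s) := by
    have := Real.Gamma_pos_of_pos hb
    positivity
  calc ∫⁻ x, F x = ∫⁻ x in Ioo 0 s,
        ENNReal.ofReal ((c ^ b / (Gamma b * N₁) * Real.exp (-c * s)) *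
          (x ^ (a - 1) * (1 + x) ^ (-a - b) * (s - x) ^ (b - 1))) := by rw [step1, step2]
    _ = ENNReal.ofReal (c ^ b / (Gamma b * N₁) * Real.exp (-c * s)) *
        ∫⁻ x in Ioo 0 s, ENNReal.ofReal (x ^ (a - 1) * (1 + x) ^ (-a - b) * (s - x) ^ (b - 1)) := by
      simp_rw [ENNReal.ofReal_mul hC]
      rw [lintegral_const_mul' _ _ ENNReal.ofReal_ne_top]
    _ = _ := by
      rw [cov_step ha hb hs]
      rw [ENNReal.ofReal_mul (by positivity : (0:ℝ) ≤ c ^ b / (Gamma b * N₁)),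
        ENNReal.ofReal_mul (by positivity : (0:ℝ) ≤ s ^ (a + b - 1) * (1 + s) ^ (-a))]
      ring


end main
end KummerConvAux

/-- `K⁽²⁾(a,b,c) * γ(b,c) = K⁽²⁾(a+b,-b,c)`. -/
theorem kummer_conv_gamma (a b c : ℝ) (ha : 0 < a) (hb : 0 < b) (hc : 0 < c) :
    (kummerMeasure a b c).conv (gammaMeasure b c) = kummerMeasure (a + b) (-b) c := by
  classical
  have hΓ : 0 < Real.Gamma b := Real.Gamma_pos_of_pos hb
  have hexp2 : -(a + b) - -b = -a := by ring
  set N₁ : ℝ := ∫ t in Ioi (0:ℝ), t ^ (a - 1) * (1 + t) ^ (-a - b) * Real.exp (-c * t)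
    with hN₁def
  set N₂ : ℝ := ∫ t in Ioi (0:ℝ), t ^ (a + b - 1) * (1 + t) ^ (-a) * Real.exp (-c * t)
    with hN₂def
  have hN₁ : 0 < N₁ := KummerConvAux.integral_kd_pos ha (by linarith) hc
  have hN₂ : 0 < N₂ := KummerConvAux.integral_kd_pos (by linarith) (by linarith) hc
  have hint₁ : IntegrableOn
      (fun t : ℝ => t ^ (a - 1) * (1 + t) ^ (-a - b) * Real.exp (-c * t)) (Ioi 0) :=
    KummerConvAux.integrableOn_kd ha (by linarith) hc
  have hint₂ : IntegrableOn
      (fun t : ℝ => t ^ (a + b - 1) * (1 + t) ^ (-a) * Real.exp (-c * t)) (Ioi 0) :=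
    KummerConvAux.integrableOn_kd (by linarith : (0:ℝ) < a + b) (by linarith) hc
  have hL₁ : ∫⁻ x in Ioi (0:ℝ),
      ENNReal.ofReal (x ^ (a - 1) * (1 + x) ^ (-a - b) * Real.exp (-c * x))
      = ENNReal.ofReal N₁ := by
    rw [hN₁def, ofReal_integral_eq_lintegral_ofReal hint₁]
    filter_upwards [ae_restrict_mem measurableSet_Ioi] with t (ht : 0 < t)
    exact (KummerConvAux.kd_pos ht).le
  have hL₂ : ∫⁻ x in Ioi (0:ℝ),
      ENNReal.ofReal (x ^ (a + b - 1) * (1 + x) ^ (-a) * Real.exp (-c * x))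
      = ENNReal.ofReal N₂ := by
    rw [hN₂def, ofReal_integral_eq_lintegral_ofReal hint₂]
    filter_upwards [ae_restrict_mem measurableSet_Ioi] with t (ht : 0 < t)
    exact (KummerConvAux.kd_pos ht).le
  set F : ℝ → ℝ≥0∞ := (Ioi (0:ℝ)).indicator
    (fun w => ENNReal.ofReal ((w ^ (a - 1) * (1 + w) ^ (-a - b) * Real.exp (-c * w)) / N₁))
    with hFdef
  have hK1 : kummerMeasure a b c = volume.withDensity F := by
    unfold kummerMeasure
    rw [hFdef, ← hN₁def]
    exact (withDensity_indicator measurableSet_Ioi _).symm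
  set F₂ : ℝ → ℝ≥0∞ := (Ioi (0:ℝ)).indicator
    (fun w => ENNReal.ofReal ((w ^ (a + b - 1) * (1 + w) ^ (-a) * Real.exp (-c * w)) / N₂))
    with hF₂def
  have hK2 : kummerMeasure (a + b) (-b) c = volume.withDensity F₂ := by
    unfold kummerMeasure
    simp only [hexp2]
    rw [hF₂def, ← hN₂def]
    exact (withDensity_indicator measurableSet_Ioi _).symm
  have hFmeas : Measurable F := by
    apply Measurable.indicator _ measurableSet_Ioi
    fun_prop
  have hGmeas : Measurable (gammaPDF b c) := (measurable_gammaPDFReal b c).ennreal_ofReal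
  have hgamma : gammaMeasure b c = volume.withDensity (gammaPDF b c) := rfl
  have hconv : (kummerMeasure a b c).conv (gammaMeasure b c)
      = volume.withDensity (fun s => ∫⁻ x, F x * gammaPDF b c (s - x)) := by
    rw [hK1, hgamma, KummerConvAux.conv_withDensity hFmeas hGmeas]
  set β : ℝ≥0∞ := ∫⁻ u in Ioo (0:ℝ) 1, ENNReal.ofReal (u ^ (a - 1) * (1 - u) ^ (b - 1))
    with hβdef
  set κ : ℝ≥0∞ := ENNReal.ofReal (c ^ b / (Real.Gamma b * N₁)) * β with hκdef
  have hH : (fun s => ∫⁻ x, F x * gammaPDF b c (s - x))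
      = (Ioi (0:ℝ)).indicator
        (fun s => κ * ENNReal.ofReal (s ^ (a + b - 1) * (1 + s) ^ (-a) * Real.exp (-c * s))) := by
    funext s
    rcases lt_or_ge 0 s with hs | hs
    · rw [indicator_of_mem (mem_Ioi.mpr hs), hFdef]
      exact KummerConvAux.H_eval_pos ha hb hc hN₁ hs
    · rw [indicator_of_notMem (by simpa using hs), hFdef]
      exact KummerConvAux.H_eval_neg hs
  have hμuniv : volume.withDensity F univ = 1 := by
    rw [withDensity_apply _ MeasurableSet.univ, Measure.restrict_univ, hFdef,
      lintegral_indicator measurableSet_Ioi]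
    simp_rw [div_eq_mul_inv, ENNReal.ofReal_mul' (inv_nonneg.mpr hN₁.le)]
    rw [lintegral_mul_const' _ _ ENNReal.ofReal_ne_top, hL₁,
      ← ENNReal.ofReal_mul hN₁.le, mul_inv_cancel₀ hN₁.ne', ENNReal.ofReal_one]
  haveI : IsProbabilityMeasure (gammaMeasure b c) := isProbabilityMeasure_gammaMeasure hb hc
  have hmass : κ * ENNReal.ofReal N₂ = 1 := by
    have h1 : (kummerMeasure a b c).conv (gammaMeasure b c) univ = 1 := by
      rw [Measure.conv, Measure.map_apply measurable_add MeasurableSet.univ, preimage_univ,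
        ← univ_prod_univ, Measure.prod_prod, hK1, hμuniv, hgamma]
      have := (isProbabilityMeasure_gammaMeasure hb hc).measure_univ
      rw [hgamma] at this
      rw [this, one_mul]
    rw [hconv, hH] at h1
    rw [withDensity_apply _ MeasurableSet.univ, Measure.restrict_univ,
      lintegral_indicator measurableSet_Ioi,
      lintegral_const_mul κ (by fun_prop), hL₂] at h1
    exact h1
  have hκ : κ = ENNReal.ofReal (N₂⁻¹) := by
    rw [ENNReal.ofReal_inv_of_pos hN₂]
    exact ENNReal.eq_inv_of_mul_eq_one_left hmass
  rw [hconv, hH, hK2, hF₂def]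
  congr 1
  funext s
  by_cases hs : s ∈ Ioi (0:ℝ)
  · rw [indicator_of_mem hs, indicator_of_mem hs, div_eq_mul_inv,
      ENNReal.ofReal_mul' (inv_nonneg.mpr hN₂.le), hκ, mul_comm]
  · rw [indicator_of_notMem hs, indicator_of_notMem hs]
end

section
/- For any a,b,c>0, the pushforward of the product measure K^{(2)}(a,b,c)⊗γ(b,c) under the map (u,v) ↦ ((1+1/(u+v))/(1+1/u), u+v) is the product measure Beta(a,b)⊗K^{(2)}(a+b,−b,c). -/
open Set MeasureTheory ProbabilityTheory

/-- The standard beta distribution `Beta(a,b)` on `(0,1)`. -/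
noncomputable def betaMeasure' (a b : ℝ) : Measure ℝ :=
  (volume.restrict (Ioo (0:ℝ) 1)).withDensity
    (fun z => ENNReal.ofReal
      (Real.Gamma (a + b) / (Real.Gamma a * Real.Gamma b) * (z ^ (a - 1) * (1 - z) ^ (b - 1))))

noncomputable section
namespace KGP

def phi : ℝ × ℝ → ℝ × ℝ := fun p => ((1 + 1 / (p.1 + p.2)) / (1 + 1 / p.1), p.1 + p.2)
def S : Set (ℝ × ℝ) := Ioi 0 ×ˢ Ioi 0
def T : Set (ℝ × ℝ) := Ioo 0 1 ×ˢ Ioi 0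
def A (p : ℝ × ℝ) : ℝ :=
  (-(1 + 1/p.1)/(p.1+p.2)^2 + (1 + 1/(p.1+p.2))/p.1^2) / (1 + 1/p.1)^2
def B (p : ℝ × ℝ) : ℝ := (-1/(p.1+p.2)^2) / (1 + 1/p.1)
def fder (p : ℝ × ℝ) : ℝ × ℝ →L[ℝ] ℝ × ℝ :=
  ((A p) • ContinuousLinearMap.fst ℝ ℝ ℝ + (B p) • ContinuousLinearMap.snd ℝ ℝ ℝ).prod
    (ContinuousLinearMap.fst ℝ ℝ ℝ + ContinuousLinearMap.snd ℝ ℝ ℝ)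

/-- density numerator of the Kummer measure -/
def dK (p q c u : ℝ) : ℝ := u ^ (p - 1) * (1 + u) ^ (-p - q) * Real.exp (-c * u)
def IK (p q c : ℝ) : ℝ := ∫ t in Ioi (0:ℝ), dK p q c t
def dB (a b z : ℝ) : ℝ := z ^ (a - 1) * (1 - z) ^ (b - 1)
def dG (b c v : ℝ) : ℝ := v ^ (b - 1) * Real.exp (-(c * v))

lemma kummer_eq (p q c : ℝ) :
    kummerMeasure p q c = (volume.restrict (Ioi (0:ℝ))).withDensity
      (fun u => ENNReal.ofReal (dK p q c u / IK p q c)) := rfl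

lemma measurable_phi : Measurable phi := by unfold phi; fun_prop

lemma measurable_dK (p q c : ℝ) : Measurable (dK p q c) := by unfold dK; fun_prop
lemma measurable_dB (a b : ℝ) : Measurable (dB a b) := by unfold dB; fun_prop
lemma measurable_dG (b c : ℝ) : Measurable (dG b c) := by unfold dG; fun_prop
lemma measurable_A : Measurable A := by unfold A; fun_prop
lemma measurable_B : Measurable B := by unfold B; fun_prop

lemma hasfder {p : ℝ × ℝ} (hp : p ∈ S) : HasFDerivAt phi (fder p) p := by
  obtain ⟨hu, hv⟩ := hp
  simp only [Set.mem_Ioi] at hu hv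
  have hu0 : p.1 ≠ 0 := ne_of_gt hu
  have hw : 0 < p.1 + p.2 := by positivity
  have hw0 : p.1 + p.2 ≠ 0 := ne_of_gt hw
  have hD : (1 : ℝ) + 1/p.1 ≠ 0 := by positivity
  have h2 : HasFDerivAt (fun q : ℝ × ℝ => q.1 + q.2)
      (ContinuousLinearMap.fst ℝ ℝ ℝ + ContinuousLinearMap.snd ℝ ℝ ℝ) p :=
    hasFDerivAt_fst.add hasFDerivAt_snd
  have hN : HasFDerivAt (fun q : ℝ × ℝ => 1 + 1/(q.1 + q.2))
      (((-((ContinuousLinearMap.mulLeftRight ℝ ℝ) (p.1+p.2)⁻¹) (p.1+p.2)⁻¹).comp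
        (ContinuousLinearMap.fst ℝ ℝ ℝ + ContinuousLinearMap.snd ℝ ℝ ℝ))) p := by
    simp only [one_div]
    exact ((hasFDerivAt_inv' hw0).comp p h2).const_add 1
  have hDf : HasFDerivAt (fun q : ℝ × ℝ => 1 + 1/q.1)
      (((-((ContinuousLinearMap.mulLeftRight ℝ ℝ) (p.1)⁻¹) (p.1)⁻¹).comp
        (ContinuousLinearMap.fst ℝ ℝ ℝ))) p := by
    simp only [one_div]
    exact ((hasFDerivAt_inv' hu0).comp p hasFDerivAt_fst).const_add 1
  have hDinv : HasFDerivAt (fun q : ℝ × ℝ => (1 + 1/q.1)⁻¹)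
      ((-((ContinuousLinearMap.mulLeftRight ℝ ℝ) (1 + 1/p.1)⁻¹) (1 + 1/p.1)⁻¹).comp
        (((-((ContinuousLinearMap.mulLeftRight ℝ ℝ) (p.1)⁻¹) (p.1)⁻¹).comp
        (ContinuousLinearMap.fst ℝ ℝ ℝ)))) p :=
    (hasFDerivAt_inv' hD).comp p hDf
  have hz := hN.mul hDinv
  have hphi := hz.prodMk h2
  have hfun : phi = fun q : ℝ × ℝ => ((1 + 1/(q.1+q.2)) * (1 + 1/q.1)⁻¹, q.1 + q.2) := by
    funext q; simp [phi, div_eq_mul_inv]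
  rw [hfun]
  refine hphi.congr_fderiv ?_
  apply ContinuousLinearMap.ext
  intro y
  apply Prod.ext
  · simp only [fder, A, B, ContinuousLinearMap.prod_apply, ContinuousLinearMap.add_apply,
      ContinuousLinearMap.coe_smul', Pi.smul_apply, ContinuousLinearMap.coe_fst',
      ContinuousLinearMap.coe_snd', ContinuousLinearMap.coe_comp', Function.comp_apply,
      ContinuousLinearMap.neg_apply, ContinuousLinearMap.mulLeftRight_apply, smul_eq_mul]
    field_simp
    ring
  · simp [fder]

lemma det_fder (p : ℝ × ℝ) : (fder p).det = A p - B p := by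
  have h : (fder p : ℝ × ℝ →ₗ[ℝ] ℝ × ℝ) =
      Matrix.toLin (Module.Basis.finTwoProd ℝ) (Module.Basis.finTwoProd ℝ) !![A p, B p; 1, 1] := by
    rw [Matrix.toLin_finTwoProd]
    ext x <;> simp [fder]
  rw [ContinuousLinearMap.det, h, LinearMap.det_toLin, Matrix.det_fin_two_of]
  ring

lemma z_formula {u v : ℝ} (hu : 0 < u) (hv : 0 < v) :
    (1 + 1 / (u + v)) / (1 + 1 / u) = u * (1 + (u + v)) / ((u + v) * (1 + u)) := by
  have h1 : u ≠ 0 := ne_of_gt hu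
  have h2 : u + v ≠ 0 := by positivity
  have h3 : (1:ℝ) + u ≠ 0 := by positivity
  field_simp
  ring

lemma AB_eq {p : ℝ × ℝ} (hp : p ∈ S) :
    A p - B p = (1 + (p.1 + p.2)) / ((p.1 + p.2) * (1 + p.1)^2) := by
  obtain ⟨hu, hv⟩ := hp
  simp only [Set.mem_Ioi] at hu hv
  have h1 : p.1 ≠ 0 := ne_of_gt hu
  have h2 : p.1 + p.2 ≠ 0 := by positivity
  have h3 : (1:ℝ) + p.1 ≠ 0 := by positivity
  have h4 : (1:ℝ) + 1/p.1 ≠ 0 := by positivity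
  unfold A B
  field_simp
  ring

lemma det_pos {p : ℝ × ℝ} (hp : p ∈ S) : 0 < A p - B p := by
  rw [AB_eq hp]
  obtain ⟨hu, hv⟩ := hp
  simp only [Set.mem_Ioi] at hu hv
  positivity

lemma injOn_phi : Set.InjOn phi S := by
  rintro p hp q hq h
  obtain ⟨hu, hv⟩ := hp
  obtain ⟨hu', hv'⟩ := hq
  simp only [S, Set.mem_prod, Set.mem_Ioi] at hu hv hu' hv'
  have hw : p.1 + p.2 = q.1 + q.2 := congrArg Prod.snd h
  have hz := congrArg Prod.fst h
  simp only [phi] at hz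
  rw [hw] at hz
  have h2 : q.1 + q.2 ≠ 0 := by positivity
  have hNpos : (0:ℝ) < 1 + 1/(q.1 + q.2) := by positivity
  have hd1 : (1:ℝ) + 1/p.1 ≠ 0 := by positivity
  have hd2 : (1:ℝ) + 1/q.1 ≠ 0 := by positivity
  have : (1:ℝ) + 1/p.1 = 1 + 1/q.1 := by
    rw [div_eq_div_iff hd1 hd2] at hz
    have h' := mul_left_cancel₀ (ne_of_gt hNpos)
      (by linarith [hz] : (1 + 1/(q.1+q.2)) * (1 + 1/q.1) = (1 + 1/(q.1+q.2)) * (1 + 1/p.1))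
    linarith
  have hp1 : p.1 = q.1 := by
    have h2' : 1/p.1 = 1/q.1 := by linarith
    have hp0 : p.1 ≠ 0 := ne_of_gt hu
    have hq0 : q.1 ≠ 0 := ne_of_gt hu'
    field_simp at h2'
    linarith
  have hp2 : p.2 = q.2 := by linarith [hw, hp1]
  exact Prod.ext hp1 hp2

lemma image_phi : phi '' S = T := by
  apply Set.Subset.antisymm
  · rintro _ ⟨p, ⟨hu, hv⟩, rfl⟩
    simp only [S, Set.mem_prod, Set.mem_Ioi] at hu hv
    have hw : 0 < p.1 + p.2 := by positivity
    constructor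
    · constructor
      · simp only [phi]
        positivity
      · simp only [phi]
        rw [div_lt_one (by positivity)]
        have : 1/(p.1+p.2) < 1/p.1 := by
          apply one_div_lt_one_div_of_lt hu
          linarith
        linarith
    · exact hw
  · rintro ⟨z, w⟩ ⟨⟨hz0, hz1⟩, hw⟩
    simp only [Set.mem_Ioi] at hw
    set u := z * w / (1 + (1 - z) * w) with hu_def
    have hden : (0:ℝ) < 1 + (1 - z) * w := by
      have : 0 < (1 - z) * w := by
        apply mul_pos; linarith; exact hw
      linarith
    have hu : 0 < u := by
      apply div_pos (by positivity) hden
    have hz0' : (0:ℝ) < z := hz0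
    have hz1' : z < 1 := hz1
    have huw : u < w := by
      rw [hu_def, div_lt_iff₀ hden]
      nlinarith [mul_pos (mul_pos (sub_pos.2 hz1') hw) (by linarith : (0:ℝ) < 1 + w)]
    refine ⟨(u, w - u), ⟨hu, by simpa using huw⟩, ?_⟩
    simp only [phi]
    have h1 : u + (w - u) = w := by ring
    rw [h1]
    simp only [Prod.mk.injEq]
    refine ⟨?_, trivial⟩
    show (1 + 1/w) / (1 + 1/u) = z
    have hu0 : u ≠ 0 := ne_of_gt hu
    have hw0 : w ≠ 0 := ne_of_gt hw
    have hden0 : (1 + (1 - z) * w) ≠ 0 := ne_of_gt hden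
    rw [hu_def]
    field_simp
    ring

lemma density_id (a b c : ℝ) {u v : ℝ} (hu : 0 < u) (hv : 0 < v) :
    ((1 + (u + v)) / ((u + v) * (1 + u) ^ 2)) *
      ((((1 + 1/(u+v))/(1 + 1/u)) ^ (a-1) * (1 - (1 + 1/(u+v))/(1 + 1/u)) ^ (b-1)) *
       ((u+v) ^ (a+b-1) * (1+(u+v)) ^ (-(a+b) - -b) * Real.exp (-c*(u+v))))
    = (u ^ (a-1) * (1+u) ^ (-a-b) * Real.exp (-c*u)) * (v ^ (b-1) * Real.exp (-(c*v))) := by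
  have hw : (0:ℝ) < u + v := by positivity
  have h1u : (0:ℝ) < 1 + u := by positivity
  have h1w : (0:ℝ) < 1 + (u + v) := by positivity
  have hz := z_formula hu hv
  have h1z : 1 - u * (1 + (u + v)) / ((u + v) * (1 + u)) = v / ((u + v) * (1 + u)) := by
    have h2 : (u + v) * (1 + u) ≠ 0 := by positivity
    field_simp
    ring
  rw [hz, h1z]
  rw [Real.div_rpow (by positivity) (by positivity),
      Real.div_rpow (by positivity) (by positivity),
      Real.mul_rpow (le_of_lt hu) (le_of_lt h1w),
      Real.mul_rpow (le_of_lt hw) (le_of_lt h1u), Real.mul_rpow (le_of_lt hw) (le_of_lt h1u)]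
  rw [show a + b - 1 = (a-1) + ((b-1) + 1) by ring, Real.rpow_add hw, Real.rpow_add hw,
      Real.rpow_one]
  rw [show -(a+b) - -b = -(a-1) + (-1) by ring, Real.rpow_add h1w, Real.rpow_neg_one,
      Real.rpow_neg (le_of_lt h1w)]
  rw [show -a - b = -(a-1) + (-(b-1) + (-2)) by ring, Real.rpow_add h1u, Real.rpow_add h1u,
      Real.rpow_neg (le_of_lt h1u), Real.rpow_neg (le_of_lt h1u),
      show ((-2:ℝ)) = ((-2:ℤ):ℝ) by norm_num, Real.rpow_intCast, zpow_neg,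
      show ((2:ℤ)) = ((2:ℕ):ℤ) by norm_num, zpow_natCast]
  rw [show -c*(u+v) = -c*u + -(c*v) by ring, Real.exp_add]
  have e1 : u ^ (a-1) ≠ 0 := (Real.rpow_pos_of_pos hu _).ne'
  have e2 : v ^ (b-1) ≠ 0 := (Real.rpow_pos_of_pos hv _).ne'
  have e3 : (u+v) ^ (a-1) ≠ 0 := (Real.rpow_pos_of_pos hw _).ne'
  have e4 : (u+v) ^ (b-1) ≠ 0 := (Real.rpow_pos_of_pos hw _).ne'
  have e5 : (1+u) ^ (a-1) ≠ 0 := (Real.rpow_pos_of_pos h1u _).ne'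
  have e6 : (1+u) ^ (b-1) ≠ 0 := (Real.rpow_pos_of_pos h1u _).ne'
  have e7 : (1+(u+v)) ^ (a-1) ≠ 0 := (Real.rpow_pos_of_pos h1w _).ne'
  have e8 : (1+(u+v)) ≠ 0 := ne_of_gt h1w
  have e9 : (u+v) ≠ 0 := ne_of_gt hw
  have e10 : (1+u) ≠ 0 := ne_of_gt h1u
  field_simp

lemma map_withDensity_comp {α β : Type*} [MeasurableSpace α] [MeasurableSpace β]
    (μ : Measure α) {f : α → β} (hf : Measurable f) {g : β → ENNReal} (hg : Measurable g) :
    Measure.map f (μ.withDensity (fun x => g (f x))) = (Measure.map f μ).withDensity g := by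
  ext s hs
  rw [Measure.map_apply hf hs, withDensity_apply _ (hf hs), withDensity_apply _ hs,
    setLIntegral_map hs hg hf]

lemma prod_withDensity {μ ν : Measure ℝ} [SigmaFinite μ] [SigmaFinite ν]
    {f g : ℝ → ENNReal} (hf : Measurable f) (hg : Measurable g)
    [SigmaFinite (μ.withDensity f)] [SigmaFinite (ν.withDensity g)] :
    (μ.withDensity f).prod (ν.withDensity g)
      = (μ.prod ν).withDensity (fun p => f p.1 * g p.2) := by
  refine (Measure.prod_eq fun s t hs ht => ?_)
  rw [withDensity_apply _ (hs.prod ht), ← Measure.prod_restrict,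
    lintegral_prod_mul hf.aemeasurable hg.aemeasurable,
    withDensity_apply _ hs, withDensity_apply _ ht]

lemma kummer_integrable {p q c : ℝ} (hp : 0 < p) (hpq : 0 ≤ p + q) (hc : 0 < c) :
    IntegrableOn (dK p q c) (Ioi (0:ℝ)) := by
  have hmaj : IntegrableOn (fun t : ℝ => t ^ (p - 1) * Real.exp (-c * t)) (Ioi (0:ℝ)) := by
    have h := integrableOn_rpow_mul_exp_neg_mul_rpow (p := 1) (s := p - 1) (b := c)
      (by linarith) zero_lt_one hc
    refine h.congr_fun (fun x hx => ?_) measurableSet_Ioi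
    dsimp only
    rw [Real.rpow_one]
  refine Integrable.mono hmaj ((measurable_dK p q c).aestronglyMeasurable) ?_
  filter_upwards [ae_restrict_mem measurableSet_Ioi] with x hx
  have hx' : (0:ℝ) < x := hx
  show ‖dK p q c x‖ ≤ ‖x ^ (p - 1) * Real.exp (-c * x)‖
  unfold dK
  rw [Real.norm_eq_abs, Real.norm_eq_abs, abs_of_nonneg (by positivity),
    abs_of_nonneg (by positivity)]
  have h1 : (1 + x) ^ (-p - q) ≤ 1 :=
    Real.rpow_le_one_of_one_le_of_nonpos (by linarith) (by linarith)
  calc x ^ (p - 1) * (1 + x) ^ (-p - q) * Real.exp (-c * x)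
      ≤ x ^ (p - 1) * 1 * Real.exp (-c * x) := by
        apply mul_le_mul_of_nonneg_right _ (by positivity)
        exact mul_le_mul_of_nonneg_left h1 (by positivity)
    _ = x ^ (p - 1) * Real.exp (-c * x) := by ring

lemma kummer_pos {p q c : ℝ} (hp : 0 < p) (hpq : 0 ≤ p + q) (hc : 0 < c) :
    0 < IK p q c := by
  rw [IK, setIntegral_pos_iff_support_of_nonneg_ae]
  · have hsub : Ioi (0:ℝ) ⊆ (Function.support (dK p q c)) ∩ Ioi 0 := by
      intro x hx
      have hx' : (0:ℝ) < x := hx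
      refine ⟨?_, hx⟩
      simp only [Function.mem_support, dK]
      positivity
    calc (0:ENNReal) < volume (Ioi (0:ℝ)) := by simp
      _ ≤ _ := measure_mono hsub
  · filter_upwards [ae_restrict_mem measurableSet_Ioi] with x hx
    have hx' : (0:ℝ) < x := hx
    have : 0 < dK p q c x := by unfold dK; positivity
    exact le_of_lt this
  · exact kummer_integrable hp hpq hc

lemma beta_integrand_eq {x : ℝ} (hx : x ∈ Ioo (0:ℝ) 1) (a b : ℝ) :
    ((x ^ (a-1) * (1-x) ^ (b-1) : ℝ) : ℂ)
      = ((x:ℂ) ^ ((a:ℂ) - 1) * (1 - (x:ℂ)) ^ ((b:ℂ) - 1)) := by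
  obtain ⟨h0, h1⟩ := hx
  rw [Complex.ofReal_mul, Complex.ofReal_cpow (le_of_lt h0),
    Complex.ofReal_cpow (by linarith : (0:ℝ) ≤ 1 - x)]
  push_cast
  ring

lemma beta_integrableOn (a b : ℝ) (ha : 0 < a) (hb : 0 < b) :
    IntegrableOn (dB a b) (Ioo (0:ℝ) 1) := by
  have hC : IntegrableOn (fun x : ℝ => (x:ℂ) ^ ((a:ℂ) - 1) * (1 - (x:ℂ)) ^ ((b:ℂ) - 1))
      (Ioo (0:ℝ) 1) := by
    have h := Complex.betaIntegral_convergent (u := a) (v := b) (by simpa) (by simpa)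
    rw [intervalIntegrable_iff_integrableOn_Ioo_of_le zero_le_one] at h
    exact h
  refine IntegrableOn.congr_fun hC.re (fun x hx => ?_) measurableSet_Ioo
  rw [dB, ← beta_integrand_eq hx a b]
  simp

lemma beta_integral_eq (a b : ℝ) (ha : 0 < a) (hb : 0 < b) :
    ∫ x in Ioo (0:ℝ) 1, dB a b x
      = Real.Gamma a * Real.Gamma b / Real.Gamma (a + b) := by
  have key := Complex.Gamma_mul_Gamma_eq_betaIntegral (s := a) (t := b) (by simpa) (by simpa)
  have hBeta : Complex.betaIntegral a b
      = ((∫ x in Ioo (0:ℝ) 1, dB a b x : ℝ) : ℂ) := by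
    rw [Complex.betaIntegral, intervalIntegral.integral_of_le zero_le_one]
    calc ∫ x in Ioc (0:ℝ) 1, (x:ℂ) ^ ((a:ℂ) - 1) * (1 - (x:ℂ)) ^ ((b:ℂ) - 1)
        = ∫ x in Ioo (0:ℝ) 1, (x:ℂ) ^ ((a:ℂ) - 1) * (1 - (x:ℂ)) ^ ((b:ℂ) - 1) :=
          integral_Ioc_eq_integral_Ioo
      _ = ∫ x in Ioo (0:ℝ) 1, ((x ^ (a-1) * (1-x) ^ (b-1) : ℝ) : ℂ) :=
          (setIntegral_congr_fun measurableSet_Ioo (fun x hx => (beta_integrand_eq hx a b).symm))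
      _ = _ := integral_ofReal
  rw [hBeta, Complex.Gamma_ofReal, Complex.Gamma_ofReal,
    show ((a:ℂ) + (b:ℂ)) = ((a + b : ℝ) : ℂ) by push_cast; ring, Complex.Gamma_ofReal,
    ← Complex.ofReal_mul, ← Complex.ofReal_mul, Complex.ofReal_inj] at key
  have hG : Real.Gamma (a + b) ≠ 0 := (Real.Gamma_pos_of_pos (by positivity)).ne'
  field_simp
  linarith [key]

def gL (a b c : ℝ) : ℝ × ℝ → ENNReal :=
  fun p => ENNReal.ofReal (dK a b c p.1) * ENNReal.ofReal (dG b c p.2)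

def gB' (a b c : ℝ) : ℝ × ℝ → ENNReal :=
  fun y => ENNReal.ofReal (dB a b y.1) * ENNReal.ofReal (dK (a+b) (-b) c y.2)

lemma measurable_gL (a b c : ℝ) : Measurable (gL a b c) :=
  (ENNReal.measurable_ofReal.comp ((measurable_dK a b c).comp measurable_fst)).mul
    (ENNReal.measurable_ofReal.comp ((measurable_dG b c).comp measurable_snd))

lemma measurable_gB' (a b c : ℝ) : Measurable (gB' a b c) :=
  (ENNReal.measurable_ofReal.comp ((measurable_dB a b).comp measurable_fst)).mul
    (ENNReal.measurable_ofReal.comp ((measurable_dK (a+b) (-b) c).comp measurable_snd))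

lemma hS : MeasurableSet S := measurableSet_Ioi.prod measurableSet_Ioi
lemma hT : MeasurableSet T := measurableSet_Ioo.prod measurableSet_Ioi

lemma measurable_absdet : Measurable (fun x => ENNReal.ofReal |(fder x).det|) := by
  simp only [det_fder]
  exact ENNReal.measurable_ofReal.comp (measurable_A.sub measurable_B).abs

lemma map_gL_eq (a b c : ℝ) :
    Measure.map phi ((volume.restrict S).withDensity (gL a b c))
      = (volume.restrict T).withDensity (gB' a b c) := by
  have h1 : ∀ x ∈ S, ENNReal.ofReal |(fder x).det| * gB' a b c (phi x) = gL a b c x := by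
    rintro x hx
    obtain ⟨hu, hv⟩ := hx
    simp only [Set.mem_Ioi] at hu hv
    have hx' : x ∈ S := ⟨hu, hv⟩
    have hmem : phi x ∈ T := by
      rw [← image_phi]; exact Set.mem_image_of_mem phi hx'
    obtain ⟨⟨hz0, hz1⟩, hw0⟩ := hmem
    have hdet : |(fder x).det| = A x - B x := by
      rw [det_fder]; exact abs_of_pos (det_pos hx')
    have hz1' : (phi x).1 < 1 := hz1
    have hdB : 0 ≤ dB a b (phi x).1 :=
      mul_nonneg (Real.rpow_nonneg (le_of_lt hz0) _)
        (Real.rpow_nonneg (by linarith) _)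
    rw [hdet]
    unfold gB' gL
    rw [← ENNReal.ofReal_mul hdB, ← ENNReal.ofReal_mul (le_of_lt (det_pos hx')),
      ← ENNReal.ofReal_mul (le_of_lt (by unfold dK; positivity : (0:ℝ) < dK a b c x.1))]
    congr 1
    rw [AB_eq hx']
    exact density_id a b c hu hv
  have key0 : Measure.map phi
      ((volume.restrict S).withDensity (fun x => ENNReal.ofReal |(fder x).det|))
      = volume.restrict T := by
    rw [← image_phi]
    exact map_withDensity_abs_det_fderiv_eq_addHaar volume hS.nullMeasurableSet
      (fun x hx => (hasfder hx).hasFDerivWithinAt) injOn_phi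
  calc Measure.map phi ((volume.restrict S).withDensity (gL a b c))
      = Measure.map phi ((volume.restrict S).withDensity
          (fun x => ENNReal.ofReal |(fder x).det| * gB' a b c (phi x))) := by
        congr 1
        apply withDensity_congr_ae
        filter_upwards [ae_restrict_mem hS] with x hx
        exact (h1 x hx).symm
    _ = Measure.map phi (((volume.restrict S).withDensity
          (fun x => ENNReal.ofReal |(fder x).det|)).withDensity
          (fun x => gB' a b c (phi x))) := by
        rw [← withDensity_mul _ measurable_absdet
          (show Measurable (fun x => gB' a b c (phi x)) from
            (measurable_gB' a b c).comp measurable_phi)]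
        rfl
    _ = (Measure.map phi ((volume.restrict S).withDensity
          (fun x => ENNReal.ofReal |(fder x).det|))).withDensity (gB' a b c) :=
        map_withDensity_comp _ measurable_phi (measurable_gB' a b c)
    _ = (volume.restrict T).withDensity (gB' a b c) := by rw [key0]

lemma dG_integrable {b c : ℝ} (hb : 0 < b) (hc : 0 < c) :
    IntegrableOn (dG b c) (Ioi (0:ℝ)) := by
  have h := integrableOn_rpow_mul_exp_neg_mul_rpow (p := 1) (s := b - 1) (b := c)
    (by linarith) zero_lt_one hc
  refine h.congr_fun (fun x hx => ?_) measurableSet_Ioi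
  dsimp only
  rw [Real.rpow_one, dG, neg_mul]

lemma kummer_finite {p q c : ℝ} (hp : 0 < p) (hpq : 0 ≤ p + q) (hc : 0 < c) :
    IsFiniteMeasure ((volume.restrict (Ioi (0:ℝ))).withDensity
      (fun u => ENNReal.ofReal (dK p q c u / IK p q c))) := by
  constructor
  rw [withDensity_apply _ MeasurableSet.univ, Measure.restrict_univ]
  exact Integrable.lintegral_lt_top ((kummer_integrable hp hpq hc).div_const _)

lemma beta_finite {a b : ℝ} (ha : 0 < a) (hb : 0 < b) :
    IsFiniteMeasure ((volume.restrict (Ioo (0:ℝ) 1)).withDensity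
      (fun z => ENNReal.ofReal (Real.Gamma (a+b) / (Real.Gamma a * Real.Gamma b) * dB a b z))) := by
  constructor
  rw [withDensity_apply _ MeasurableSet.univ, Measure.restrict_univ]
  exact Integrable.lintegral_lt_top ((beta_integrableOn a b ha hb).const_mul _)

lemma ae_dK_nonneg (p q c : ℝ) :
    0 ≤ᵐ[volume.restrict (Ioi (0:ℝ))] dK p q c := by
  filter_upwards [ae_restrict_mem measurableSet_Ioi] with x hx
  have hx' : (0:ℝ) < x := hx
  have : 0 < dK p q c x := by unfold dK; positivity
  exact le_of_lt this

lemma ae_dG_nonneg (b c : ℝ) :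
    0 ≤ᵐ[volume.restrict (Ioi (0:ℝ))] dG b c := by
  filter_upwards [ae_restrict_mem measurableSet_Ioi] with x hx
  have hx' : (0:ℝ) < x := hx
  have : 0 < dG b c x := by unfold dG; positivity
  exact le_of_lt this

lemma ae_dB_nonneg (a b : ℝ) :
    0 ≤ᵐ[volume.restrict (Ioo (0:ℝ) 1)] dB a b := by
  filter_upwards [ae_restrict_mem measurableSet_Ioo] with x hx
  obtain ⟨h0, h1⟩ := hx
  exact mul_nonneg (Real.rpow_nonneg (le_of_lt h0) _) (Real.rpow_nonneg (by linarith) _)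

lemma lhs_mass (a b c : ℝ) (ha : 0 < a) (hb : 0 < b) (hc : 0 < c) :
    ((volume.restrict S).withDensity (gL a b c)) univ
      = ENNReal.ofReal (IK a b c) * ENNReal.ofReal ((1/c) ^ b * Real.Gamma b) := by
  have hres : (volume : Measure (ℝ×ℝ)).restrict S
      = (volume.restrict (Ioi (0:ℝ))).prod (volume.restrict (Ioi (0:ℝ))) := by
    rw [Measure.prod_restrict, ← Measure.volume_eq_prod]; rfl
  calc ((volume.restrict S).withDensity (gL a b c)) univ
      = ∫⁻ p, gL a b c p
          ∂((volume.restrict (Ioi (0:ℝ))).prod (volume.restrict (Ioi (0:ℝ)))) := by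
        rw [withDensity_apply _ MeasurableSet.univ, Measure.restrict_univ, hres]
    _ = (∫⁻ u in Ioi (0:ℝ), ENNReal.ofReal (dK a b c u))
          * (∫⁻ v in Ioi (0:ℝ), ENNReal.ofReal (dG b c v)) :=
        lintegral_prod_mul (ENNReal.measurable_ofReal.comp (measurable_dK a b c)).aemeasurable
          (ENNReal.measurable_ofReal.comp (measurable_dG b c)).aemeasurable
    _ = ENNReal.ofReal (IK a b c) * ENNReal.ofReal ((1/c) ^ b * Real.Gamma b) := by
        congr 1
        · rw [← ofReal_integral_eq_lintegral_ofReal (kummer_integrable ha (by linarith) hc)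
            (ae_dK_nonneg a b c)]
          rfl
        · rw [← ofReal_integral_eq_lintegral_ofReal (dG_integrable hb hc) (ae_dG_nonneg b c)]
          congr 1
          exact Real.integral_rpow_mul_exp_neg_mul_Ioi hb hc

lemma rhs_mass (a b c : ℝ) (ha : 0 < a) (hb : 0 < b) (hc : 0 < c) :
    ((volume.restrict T).withDensity (gB' a b c)) univ
      = ENNReal.ofReal (Real.Gamma a * Real.Gamma b / Real.Gamma (a+b))
        * ENNReal.ofReal (IK (a+b) (-b) c) := by
  have hres : (volume : Measure (ℝ×ℝ)).restrict T
      = (volume.restrict (Ioo (0:ℝ) 1)).prod (volume.restrict (Ioi (0:ℝ))) := by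
    rw [Measure.prod_restrict, ← Measure.volume_eq_prod]; rfl
  calc ((volume.restrict T).withDensity (gB' a b c)) univ
      = ∫⁻ p, gB' a b c p
          ∂((volume.restrict (Ioo (0:ℝ) 1)).prod (volume.restrict (Ioi (0:ℝ)))) := by
        rw [withDensity_apply _ MeasurableSet.univ, Measure.restrict_univ, hres]
    _ = (∫⁻ z in Ioo (0:ℝ) 1, ENNReal.ofReal (dB a b z))
          * (∫⁻ w in Ioi (0:ℝ), ENNReal.ofReal (dK (a+b) (-b) c w)) :=
        lintegral_prod_mul (ENNReal.measurable_ofReal.comp (measurable_dB a b)).aemeasurable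
          (ENNReal.measurable_ofReal.comp (measurable_dK (a+b) (-b) c)).aemeasurable
    _ = ENNReal.ofReal (Real.Gamma a * Real.Gamma b / Real.Gamma (a+b))
          * ENNReal.ofReal (IK (a+b) (-b) c) := by
        congr 1
        · rw [← ofReal_integral_eq_lintegral_ofReal (beta_integrableOn a b ha hb)
            (ae_dB_nonneg a b)]
          rw [beta_integral_eq a b ha hb]
        · rw [← ofReal_integral_eq_lintegral_ofReal
            (kummer_integrable (by positivity) (by simp; linarith) hc)
            (ae_dK_nonneg (a+b) (-b) c)]
          rfl

lemma mass_identity (a b c : ℝ) (ha : 0 < a) (hb : 0 < b) (hc : 0 < c) :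
    IK a b c * ((1/c) ^ b * Real.Gamma b)
      = Real.Gamma a * Real.Gamma b / Real.Gamma (a+b) * IK (a+b) (-b) c := by
  have hmap := map_gL_eq a b c
  have hm : ((volume.restrict S).withDensity (gL a b c)) univ
      = ((volume.restrict T).withDensity (gB' a b c)) univ := by
    conv_rhs => rw [← hmap]
    rw [Measure.map_apply measurable_phi MeasurableSet.univ, Set.preimage_univ]
  rw [lhs_mass a b c ha hb hc, rhs_mass a b c ha hb hc] at hm
  have hIK1 : 0 < IK a b c := kummer_pos ha (by linarith) hc
  have hIK2 : 0 < IK (a+b) (-b) c := kummer_pos (by positivity) (by simp; linarith) hc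
  have h1 : (0:ℝ) ≤ IK a b c := le_of_lt hIK1
  have h2 : (0:ℝ) ≤ (1/c) ^ b * Real.Gamma b := by
    have := Real.Gamma_pos_of_pos hb
    positivity
  have h3 : (0:ℝ) ≤ Real.Gamma a * Real.Gamma b / Real.Gamma (a+b) := by
    have g1 := Real.Gamma_pos_of_pos ha
    have g2 := Real.Gamma_pos_of_pos hb
    have g3 := Real.Gamma_pos_of_pos (by positivity : (0:ℝ) < a + b)
    positivity
  rw [← ENNReal.ofReal_mul h1, ← ENNReal.ofReal_mul h3,
    ENNReal.ofReal_eq_ofReal_iff (mul_nonneg h1 h2)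
      (mul_nonneg h3 (le_of_lt hIK2))] at hm
  exact hm

lemma const_identity (a b c : ℝ) (ha : 0 < a) (hb : 0 < b) (hc : 0 < c) :
    (c ^ b / Real.Gamma b) / IK a b c
      = (Real.Gamma (a+b) / (Real.Gamma a * Real.Gamma b)) / IK (a+b) (-b) c := by
  have hm := mass_identity a b c ha hb hc
  have hIK1 : 0 < IK a b c := kummer_pos ha (by linarith) hc
  have hIK2 : 0 < IK (a+b) (-b) c := kummer_pos (by positivity) (by simp; linarith) hc
  have g1 := Real.Gamma_pos_of_pos ha
  have g2 := Real.Gamma_pos_of_pos hb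
  have g3 := Real.Gamma_pos_of_pos (by positivity : (0:ℝ) < a + b)
  have hcb : (0:ℝ) < c ^ b := Real.rpow_pos_of_pos hc _
  have hinv : ((1/c):ℝ) ^ b = (c ^ b)⁻¹ := by
    rw [one_div, Real.inv_rpow (le_of_lt hc)]
  rw [hinv] at hm
  rw [div_eq_div_iff (ne_of_gt hIK1) (ne_of_gt hIK2)]
  field_simp at hm ⊢
  nlinarith [hm, hcb, g1.le, g2.le, g3.le, hIK1.le, hIK2.le]

lemma lhs_eq (a b c : ℝ) (ha : 0 < a) (hb : 0 < b) (hc : 0 < c) :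
    (kummerMeasure a b c).prod (gammaMeasure b c)
      = ENNReal.ofReal ((c ^ b / Real.Gamma b) / IK a b c)
          • ((volume.restrict S).withDensity (gL a b c)) := by
  haveI := kummer_finite ha (by linarith : (0:ℝ) ≤ a + b) hc
  haveI : IsProbabilityMeasure ((volume : Measure ℝ).withDensity (gammaPDF b c)) :=
    isProbabilityMeasure_gammaMeasure hb hc
  rw [kummer_eq, gammaMeasure]
  rw [prod_withDensity
    (show Measurable (fun u : ℝ => ENNReal.ofReal (dK a b c u / IK a b c)) from
      ENNReal.measurable_ofReal.comp ((measurable_dK a b c).div_const _))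
    (show Measurable (gammaPDF b c) from
      ENNReal.measurable_ofReal.comp (measurable_gammaPDFReal b c))]
  have hbase : (volume.restrict (Ioi (0:ℝ))).prod (volume : Measure ℝ)
      = (volume : Measure (ℝ × ℝ)).restrict (Ioi (0:ℝ) ×ˢ (univ : Set ℝ)) := by
    have h1 : (volume.restrict (Ioi (0:ℝ))).prod (volume.restrict (univ : Set ℝ))
        = (volume : Measure (ℝ × ℝ)).restrict (Ioi (0:ℝ) ×ˢ (univ : Set ℝ)) := by
      rw [Measure.prod_restrict, ← Measure.volume_eq_prod]
    rwa [Measure.restrict_univ] at h1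
  rw [hbase]
  have hsplit : (Ioi (0:ℝ)) ×ˢ (univ : Set ℝ) = (Ioi (0:ℝ) ×ˢ Iic (0:ℝ)) ∪ S := by
    rw [show S = Ioi (0:ℝ) ×ˢ Ioi (0:ℝ) from rfl, ← Set.prod_union, Iic_union_Ioi]
  have hdisj : Disjoint (Ioi (0:ℝ) ×ˢ Iic (0:ℝ)) S := by
    rw [Set.disjoint_left]
    rintro p ⟨_, (h2 : p.2 ≤ 0)⟩ ⟨_, (h2' : 0 < p.2)⟩
    linarith
  rw [hsplit, Measure.restrict_union hdisj hS, withDensity_add_measure]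
  have hzero : ((volume : Measure (ℝ × ℝ)).restrict (Ioi (0:ℝ) ×ˢ Iic (0:ℝ))).withDensity
      (fun p => ENNReal.ofReal (dK a b c p.1 / IK a b c) * gammaPDF b c p.2) = 0 := by
    refine (withDensity_eq_zero_iff ?_).2 ?_
    · exact ((ENNReal.measurable_ofReal.comp ((measurable_dK a b c).div_const _)).comp
        measurable_fst).mul
        ((ENNReal.measurable_ofReal.comp (measurable_gammaPDFReal b c)).comp
          measurable_snd) |>.aemeasurable
    · have hae : ∀ᵐ p : ℝ × ℝ ∂volume, p.2 ≠ 0 := by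
        rw [ae_iff]
        have : {p : ℝ × ℝ | ¬p.2 ≠ 0} = (univ : Set ℝ) ×ˢ ({0} : Set ℝ) := by
          ext p
          simp only [Set.mem_setOf_eq, not_ne_iff, Set.mem_prod, Set.mem_univ,
            Set.mem_singleton_iff, true_and]
        rw [this, Measure.volume_eq_prod, Measure.prod_prod]
        simp
      filter_upwards [ae_restrict_mem (measurableSet_Ioi.prod measurableSet_Iic),
        ae_restrict_of_ae hae] with p hp hp2
      have hneg : p.2 < 0 := lt_of_le_of_ne hp.2 hp2
      have : gammaPDF b c p.2 = 0 := gammaPDF_of_neg hneg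
      simp [this]
  rw [hzero, zero_add]
  have hcongr : (fun p : ℝ × ℝ => ENNReal.ofReal (dK a b c p.1 / IK a b c) * gammaPDF b c p.2)
      =ᵐ[(volume : Measure (ℝ × ℝ)).restrict S]
      (fun p => ENNReal.ofReal ((c ^ b / Real.Gamma b) / IK a b c) * gL a b c p) := by
    filter_upwards [ae_restrict_mem hS] with p hp
    obtain ⟨hu, hv⟩ := hp
    simp only [Set.mem_Ioi] at hu hv
    rw [gammaPDF_of_nonneg (le_of_lt hv)]
    have hIK : 0 < IK a b c := kummer_pos ha (by linarith) hc
    have hdk : 0 ≤ dK a b c p.1 / IK a b c := by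
      apply div_nonneg _ (le_of_lt hIK)
      have : 0 < dK a b c p.1 := by unfold dK; positivity
      exact le_of_lt this
    have hcl : 0 ≤ (c ^ b / Real.Gamma b) / IK a b c := by
      have := Real.Gamma_pos_of_pos hb
      positivity
    unfold gL
    rw [← ENNReal.ofReal_mul hdk, ← ENNReal.ofReal_mul
      (by have : 0 < dK a b c p.1 := by unfold dK; positivity
          exact le_of_lt this),
      ← ENNReal.ofReal_mul hcl]
    congr 1
    unfold dG
    have hIK' : IK a b c ≠ 0 := ne_of_gt hIK
    field_simp
  rw [withDensity_congr_ae hcongr,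
    show (fun p : ℝ × ℝ => ENNReal.ofReal ((c ^ b / Real.Gamma b) / IK a b c) * gL a b c p)
      = (ENNReal.ofReal ((c ^ b / Real.Gamma b) / IK a b c) • gL a b c) from rfl,
    withDensity_smul _ (measurable_gL a b c)]

lemma rhs_eq (a b c : ℝ) (ha : 0 < a) (hb : 0 < b) (hc : 0 < c) :
    (betaMeasure' a b).prod (kummerMeasure (a + b) (-b) c)
      = ENNReal.ofReal ((Real.Gamma (a+b) / (Real.Gamma a * Real.Gamma b)) / IK (a+b) (-b) c)
          • ((volume.restrict T).withDensity (gB' a b c)) := by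
  haveI := kummer_finite (show (0:ℝ) < a + b by positivity)
    (by simp; linarith : (0:ℝ) ≤ (a + b) + -b) hc
  haveI := beta_finite ha hb
  rw [show betaMeasure' a b = (volume.restrict (Ioo (0:ℝ) 1)).withDensity
      (fun z => ENNReal.ofReal (Real.Gamma (a+b) / (Real.Gamma a * Real.Gamma b) * dB a b z))
      from rfl,
    kummer_eq]
  rw [prod_withDensity
    (show Measurable (fun z : ℝ => ENNReal.ofReal
        (Real.Gamma (a+b) / (Real.Gamma a * Real.Gamma b) * dB a b z)) from
      ENNReal.measurable_ofReal.comp ((measurable_dB a b).const_mul _))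
    (show Measurable (fun u : ℝ => ENNReal.ofReal (dK (a+b) (-b) c u / IK (a+b) (-b) c)) from
      ENNReal.measurable_ofReal.comp ((measurable_dK (a+b) (-b) c).div_const _))]
  have hbase : (volume.restrict (Ioo (0:ℝ) 1)).prod (volume.restrict (Ioi (0:ℝ)))
      = (volume : Measure (ℝ × ℝ)).restrict T := by
    rw [Measure.prod_restrict, ← Measure.volume_eq_prod]; rfl
  rw [hbase]
  have hcongr : (fun p : ℝ × ℝ =>
        ENNReal.ofReal (Real.Gamma (a+b) / (Real.Gamma a * Real.Gamma b) * dB a b p.1)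
          * ENNReal.ofReal (dK (a+b) (-b) c p.2 / IK (a+b) (-b) c))
      =ᵐ[(volume : Measure (ℝ × ℝ)).restrict T]
      (fun p => ENNReal.ofReal ((Real.Gamma (a+b) / (Real.Gamma a * Real.Gamma b))
          / IK (a+b) (-b) c) * gB' a b c p) := by
    filter_upwards [ae_restrict_mem hT] with p hp
    obtain ⟨⟨hz0, hz1⟩, hw⟩ := hp
    simp only [Set.mem_Ioi] at hw
    have hIK : 0 < IK (a+b) (-b) c :=
      kummer_pos (by positivity) (by simp; linarith) hc
    have g1 := Real.Gamma_pos_of_pos ha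
    have g2 := Real.Gamma_pos_of_pos hb
    have g3 := Real.Gamma_pos_of_pos (show (0:ℝ) < a + b by positivity)
    have hdB : 0 ≤ dB a b p.1 :=
      mul_nonneg (Real.rpow_nonneg (le_of_lt hz0) _) (Real.rpow_nonneg (by linarith) _)
    have hcb : 0 ≤ Real.Gamma (a+b) / (Real.Gamma a * Real.Gamma b) * dB a b p.1 := by
      apply mul_nonneg (by positivity) hdB
    have hcr : 0 ≤ (Real.Gamma (a+b) / (Real.Gamma a * Real.Gamma b)) / IK (a+b) (-b) c := by
      positivity
    unfold gB'
    rw [← ENNReal.ofReal_mul hcb, ← ENNReal.ofReal_mul hdB, ← ENNReal.ofReal_mul hcr]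
    congr 1
    field_simp
  rw [withDensity_congr_ae hcongr,
    show (fun p : ℝ × ℝ => ENNReal.ofReal ((Real.Gamma (a+b) / (Real.Gamma a * Real.Gamma b))
        / IK (a+b) (-b) c) * gB' a b c p)
      = (ENNReal.ofReal ((Real.Gamma (a+b) / (Real.Gamma a * Real.Gamma b))
        / IK (a+b) (-b) c) • gB' a b c) from rfl,
    withDensity_smul _ (measurable_gB' a b c)]

end KGP
end

/-- the pushforward of `K⁽²⁾(a,b,c) ⊗ γ(b,c)` under
`(u,v) ↦ ((1+1/(u+v))/(1+1/u), u+v)` is `Beta(a,b) ⊗ K⁽²⁾(a+b,-b,c)`. -/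
theorem kummer_gamma_pushforward (a b c : ℝ) (ha : 0 < a) (hb : 0 < b) (hc : 0 < c) :
    Measure.map (fun p : ℝ × ℝ => ((1 + 1 / (p.1 + p.2)) / (1 + 1 / p.1), p.1 + p.2))
        ((kummerMeasure a b c).prod (gammaMeasure b c))
      = (betaMeasure' a b).prod (kummerMeasure (a + b) (-b) c) := by
  show Measure.map KGP.phi ((kummerMeasure a b c).prod (gammaMeasure b c))
      = (betaMeasure' a b).prod (kummerMeasure (a + b) (-b) c)
  rw [KGP.lhs_eq a b c ha hb hc, KGP.rhs_eq a b c ha hb hc, Measure.map_smul,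
    KGP.map_gL_eq a b c, KGP.const_identity a b c ha hb hc]
end

section
/- Suppose (a_n)_{n≥1} are real numbers with a₁=0, a₂≠0, satisfying for all k≥0: C(k+3,k)·a_{k+3}·a₁=(k+1)a_{k+1}a₃ and 2C(k+4,k)·a_{k+4}·a₁+C(k+3,k)·a_{k+3}·a₂−C(k+2,k)·a_{k+2}·a₃−2(k+1)a_{k+1}a₄=0 (with a₀:=0). Then a_{2n+1}=0 for all n≥0 and a_{2k}=(12a₄/a₂)^{k−1}·(2/(2k)!)·a₂ for all k≥1. -/
/-- if `(aₙ)` satisfies `a₀ = a₁ = 0`, `a₂ ≠ 0` and the combinatorial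
recurrences coming from the delay equation, then all odd coefficients vanish and
`a_{2k} = (12a₄/a₂)^{k-1} · 2/(2k)! · a₂` for `k ≥ 1`. -/
theorem coefficients_recurrence (a : ℕ → ℝ)
    (h0 : a 0 = 0) (h1 : a 1 = 0) (h2 : a 2 ≠ 0)
    (hA : ∀ k : ℕ, (Nat.choose (k + 3) k : ℝ) * a (k + 3) * a 1
      = (k + 1) * a (k + 1) * a 3)
    (hB : ∀ k : ℕ, 2 * (Nat.choose (k + 4) k : ℝ) * a (k + 4) * a 1
      + (Nat.choose (k + 3) k : ℝ) * a (k + 3) * a 2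
      - (Nat.choose (k + 2) k : ℝ) * a (k + 2) * a 3
      - 2 * (k + 1) * a (k + 1) * a 4 = 0) :
    (∀ n : ℕ, a (2 * n + 1) = 0) ∧
    ∀ k : ℕ, 1 ≤ k →
      a (2 * k) = (12 * a 4 / a 2) ^ (k - 1) * (2 / (Nat.factorial (2 * k) : ℝ)) * a 2 := by
  -- First, a 3 = 0
  have h3 : a 3 = 0 := by
    have h := hA 2
    rw [h1] at h
    have h' : a 3 * a 3 = 0 := by nlinarith [h]
    exact mul_self_eq_zero.mp h'
  -- Key recurrence
  have key : ∀ m : ℕ, (Nat.choose (m + 3) m : ℝ) * a (m + 3) * a 2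
      = 2 * ((m : ℝ) + 1) * a (m + 1) * a 4 := by
    intro m
    have h := hB m
    rw [h1, h3] at h
    linarith
  -- Odd coefficients vanish
  have hodd : ∀ n : ℕ, a (2 * n + 1) = 0 := by
    intro n
    induction n with
    | zero => simpa using h1
    | succ n ih =>
      have hk := key (2 * n)
      rw [ih] at hk
      have hk0 : (Nat.choose (2 * n + 3) (2 * n) : ℝ) * a (2 * n + 3) * a 2 = 0 := by
        rw [hk]; ring
      have hc : (Nat.choose (2 * n + 3) (2 * n) : ℝ) ≠ 0 := by
        exact_mod_cast (Nat.choose_pos (by omega : 2 * n ≤ 2 * n + 3)).ne'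
      have ha : a (2 * n + 3) = 0 := by
        rcases mul_eq_zero.mp hk0 with h | h
        · rcases mul_eq_zero.mp h with h' | h'
          · exact absurd h' hc
          · exact h'
        · exact absurd h h2
      have e : 2 * (n + 1) + 1 = 2 * n + 3 := by ring
      rw [e, ha]
  -- Value of the relevant binomial coefficient
  have hchoose : ∀ n : ℕ, ((2 * n + 4).choose (2 * n + 1) : ℝ) * 6
      = (2 * (n : ℝ) + 4) * (2 * n + 3) * (2 * n + 2) := by
    intro n
    have e1 : (2 * n + 4).choose (2 * n + 1) = (2 * n + 4).choose 3 := by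
      have e : 2 * n + 1 = 2 * n + 4 - 3 := by omega
      rw [e, Nat.choose_symm (by omega)]
    have c1 : (2 * n + 4) * (2 * n + 3).choose 2 = (2 * n + 4).choose 3 * 3 := by
      have := Nat.add_one_mul_choose_eq (2 * n + 3) 2
      simpa [Nat.succ_eq_add_one, show 2 * n + 3 + 1 = 2 * n + 4 from rfl] using this
    have c2 : (2 * n + 3) * (2 * n + 2) = (2 * n + 3).choose 2 * 2 := by
      have := Nat.add_one_mul_choose_eq (2 * n + 2) 1
      simpa [Nat.succ_eq_add_one, show 2 * n + 2 + 1 = 2 * n + 3 from rfl] using this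
    have c3 : (2 * n + 4).choose 3 * 6 = (2 * n + 4) * (2 * n + 3) * (2 * n + 2) := by
      calc (2 * n + 4).choose 3 * 6 = ((2 * n + 4).choose 3 * 3) * 2 := by ring
        _ = ((2 * n + 4) * (2 * n + 3).choose 2) * 2 := by rw [c1]
        _ = (2 * n + 4) * ((2 * n + 3).choose 2 * 2) := by ring
        _ = (2 * n + 4) * ((2 * n + 3) * (2 * n + 2)) := by rw [← c2]
        _ = (2 * n + 4) * (2 * n + 3) * (2 * n + 2) := by ring
    rw [e1]
    exact_mod_cast congrArg (fun x : ℕ => (x : ℝ)) c3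
  -- polynomial form of the even coefficient formula, by induction
  have hP : ∀ n : ℕ, a (2 * (n + 1)) * ((2 * (n + 1)).factorial : ℝ) * (a 2) ^ n
      = (12 * a 4) ^ n * 2 * a 2 := by
    intro n
    induction n with
    | zero => norm_num [Nat.factorial]; ring
    | succ n ih =>
      have hk := key (2 * n + 1)
      have e1 : 2 * n + 1 + 3 = 2 * n + 4 := by omega
      have e2 : 2 * n + 1 + 1 = 2 * n + 2 := by omega
      rw [e1, e2] at hk
      push_cast at hk
      -- hk : (choose (2n+4) (2n+1) : ℝ) * a (2n+4) * a 2 = 2 * (2n+1+1) * a (2n+2) * a 4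
      have step : a (2 * n + 4) * ((2 * (n:ℝ) + 4) * (2 * n + 3) * (2 * n + 2)) * a 2
          = 12 * (2 * (n:ℝ) + 2) * a (2 * n + 2) * a 4 := by
        linear_combination 6 * hk - a (2 * n + 4) * a 2 * hchoose n
      have h2n2 : (2 * (n:ℝ) + 2) ≠ 0 := by positivity
      have step' : a (2 * n + 4) * ((2 * (n:ℝ) + 4) * (2 * n + 3)) * a 2
          = 12 * a (2 * n + 2) * a 4 := by
        apply mul_right_cancel₀ h2n2
        linear_combination step
      -- factorial expansion
      have hfact : ((2 * (n + 1 + 1)).factorial : ℝ)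
          = (2 * (n:ℝ) + 4) * (2 * n + 3) * ((2 * (n + 1)).factorial : ℝ) := by
        have e : 2 * (n + 1 + 1) = (2 * (n + 1) + 1) + 1 := by omega
        rw [e, Nat.factorial_succ, Nat.factorial_succ]
        push_cast
        ring
      have e3 : 2 * (n + 1 + 1) = 2 * n + 4 := by omega
      have e4 : 2 * (n + 1) = 2 * n + 2 := by omega
      rw [e3] at hfact ⊢
      rw [e4] at hfact ih
      rw [hfact]
      calc a (2 * n + 4) * ((2 * (n:ℝ) + 4) * (2 * n + 3) * ((2 * n + 2).factorial : ℝ))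
            * a 2 ^ (n + 1)
          = (a (2 * n + 4) * ((2 * (n:ℝ) + 4) * (2 * n + 3)) * a 2)
            * (((2 * n + 2).factorial : ℝ) * a 2 ^ n) := by ring
        _ = (12 * a (2 * n + 2) * a 4) * (((2 * n + 2).factorial : ℝ) * a 2 ^ n) := by
            rw [step']
        _ = 12 * a 4 * (a (2 * n + 2) * ((2 * n + 2).factorial : ℝ) * a 2 ^ n) := by ring
        _ = 12 * a 4 * ((12 * a 4) ^ n * 2 * a 2) := by rw [ih]
        _ = (12 * a 4) ^ (n + 1) * 2 * a 2 := by ring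
  refine ⟨hodd, ?_⟩
  intro k hk
  obtain ⟨n, rfl⟩ : ∃ n, k = n + 1 := ⟨k - 1, by omega⟩
  have hP' := hP n
  have e : n + 1 - 1 = n := rfl
  rw [e, div_pow]
  have hfne : ((2 * (n + 1)).factorial : ℝ) ≠ 0 := by
    exact_mod_cast (Nat.factorial_pos _).ne'
  have ha2p : (a 2) ^ n ≠ 0 := pow_ne_zero _ h2
  field_simp
  linear_combination hP'
end
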